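/- arXiv:2306.17335 — 4 statements merged into one kernel-verified Lean document; each statement's English description precedes it below -/
import Mathlib

section
/- Let ω ∈ ℝ and let (ψ,v) ∈ H¹(ℝ)×H¹(ℝ) be a (classical) solution of the traveling-wave system −ω(ψ − bψ'') + v + a v'' + ψ v^p = 0, ω(−v + b v'') + ψ + c ψ'' + (1/(p+1)) v^{p+1} = 0 on ℝ. Then the following identities hold: J_ω(ψ,v) = (p/(p+2))·I_ω(ψ,v), J_ω(ψ,v) = −(p/2)·G(ψ,v), and I_ω(ψ,v) = −((p+2)/2)·G(ψ,v), where J_ω = I_ω + G. -/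
open MeasureTheory Real Filter Topology Set

noncomputable section

/-- `f` belongs to `H¹(ℝ)`: differentiable with `f, f' ∈ L²(ℝ)`. -/
def InH1 (f : ℝ → ℝ) : Prop :=
  Differentiable ℝ f ∧ MemLp f 2 (volume : Measure ℝ) ∧
    MemLp (deriv f) 2 (volume : Measure ℝ)

/-- Square of the `X = H¹ × H¹` norm. -/
def XnormSq (ψ v : ℝ → ℝ) : ℝ :=
  ∫ x : ℝ, (ψ x ^ 2 + deriv ψ x ^ 2 + v x ^ 2 + deriv v x ^ 2)

/-- Distance in `X`. -/
def Xdist (f g : (ℝ → ℝ) × (ℝ → ℝ)) : ℝ :=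
  Real.sqrt (XnormSq (fun x => f.1 x - g.1 x) (fun x => f.2 x - g.2 x))

/-- Sign-preserving (odd) real power, modelling `x^q` for rationals `q` with odd
numerator and denominator. -/
def opow (x q : ℝ) : ℝ := Real.sign x * |x| ^ q

def I1fun (a c : ℝ) (ψ v : ℝ → ℝ) : ℝ :=
  ∫ x : ℝ, (ψ x ^ 2 - c * deriv ψ x ^ 2 + v x ^ 2 - a * deriv v x ^ 2)

def I2fun (b ω : ℝ) (ψ v : ℝ → ℝ) : ℝ :=
  -2 * ω * ∫ x : ℝ, (ψ x * v x + b * deriv ψ x * deriv v x)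

def Ifun (a b c ω : ℝ) (ψ v : ℝ → ℝ) : ℝ := I1fun a c ψ v + I2fun b ω ψ v

/-- `G(ψ,v) = (2/(p+1)) ∫ ψ v^{p+1}`; since `p = p₁/p₂` with `p₁, p₂` odd, the
exponent `p+1` has even numerator and odd denominator, so `v^{p+1} = |v|^{p+1}`. -/
def Gfun (p : ℝ) (ψ v : ℝ → ℝ) : ℝ :=
  (2 / (p + 1)) * ∫ x : ℝ, ψ x * |v x| ^ (p + 1)

/-- Constrained infimum `𝓘_ω`. -/
def Iinf (a b c ω p : ℝ) : ℝ :=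
  sInf {r : ℝ | ∃ ψ v : ℝ → ℝ, InH1 ψ ∧ InH1 v ∧ Gfun p ψ v = -1 ∧
    r = Ifun a b c ω ψ v}

/-- `𝓖_ω`: the set of minimizers of `I_ω` subject to `G = -1`. -/
def Gset (a b c ω p : ℝ) : Set ((ℝ → ℝ) × (ℝ → ℝ)) :=
  {pv | InH1 pv.1 ∧ InH1 pv.2 ∧ Gfun p pv.1 pv.2 = -1 ∧
    Ifun a b c ω pv.1 pv.2 = Iinf a b c ω p}

/-- `𝓖̃_ω = ((2/(p+2)) 𝓘_ω)^{1/p} · 𝓖_ω`. -/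
def Gtilde (a b c ω p : ℝ) : Set ((ℝ → ℝ) × (ℝ → ℝ)) :=
  {qw | ∃ pv ∈ Gset a b c ω p,
    qw = (fun x => ((2 / (p + 2)) * Iinf a b c ω p) ^ (1 / p) * pv.1 x,
          fun x => ((2 / (p + 2)) * Iinf a b c ω p) ^ (1 / p) * pv.2 x)}

/-- The traveling-wave system `-ω(ψ - bψ'') + v + a v'' + ψ v^p = 0`,
`ω(-v + b v'') + ψ + c ψ'' + (1/(p+1)) v^{p+1} = 0`, for `(ψ,v) ∈ H¹ × H¹`
classical (twice continuously differentiable) solutions. -/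
def TravelingWave (a b c ω p : ℝ) (ψ v : ℝ → ℝ) : Prop :=
  InH1 ψ ∧ InH1 v ∧ ContDiff ℝ 2 ψ ∧ ContDiff ℝ 2 v ∧
  (∀ x : ℝ, -ω * (ψ x - b * iteratedDeriv 2 ψ x) + v x + a * iteratedDeriv 2 v x
      + ψ x * opow (v x) p = 0) ∧
  (∀ x : ℝ, ω * (-(v x) + b * iteratedDeriv 2 v x) + ψ x + c * iteratedDeriv 2 ψ x
      + (1 / (p + 1)) * |v x| ^ (p + 1) = 0)

/-- The Hamiltonian `𝓗`. -/
def Ham (a c p : ℝ) (η u : ℝ → ℝ) : ℝ :=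
  (1 / 2) * ∫ x : ℝ, (η x ^ 2 - c * deriv η x ^ 2 + u x ^ 2 - a * deriv u x ^ 2
      + (2 / (p + 1)) * η x * |u x| ^ (p + 1))

/-- The charge `𝓠`. -/
def charge (b : ℝ) (η u : ℝ → ℝ) : ℝ :=
  -∫ x : ℝ, (η x * u x + b * deriv η x * deriv u x)

/-- The scalar function `d(ω)`. -/
def dfun (a b c p : ℝ) (ω : ℝ) : ℝ :=
  (p / (2 * (p + 2))) * (2 / (p + 2)) ^ ((2 : ℝ) / p) *
    (Iinf a b c ω p) ^ ((p + 2) / p)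

/-- `ω(ε) = √(1 - ε^{2/(p+1)})`. -/
def omEps (p ε : ℝ) : ℝ := Real.sqrt (1 - ε ^ ((2 : ℝ) / (p + 1)))

def I1eps (a c p ε : ℝ) (z w : ℝ → ℝ) : ℝ :=
  ∫ y : ℝ, (ε ^ (-(2 : ℝ) / (p + 1)) * z y ^ 2 - c * deriv z y ^ 2
    + ε ^ (-(2 : ℝ) / (p + 1)) * w y ^ 2 - a * deriv w y ^ 2)

def I2eps (b p ε ω : ℝ) (z w : ℝ → ℝ) : ℝ :=
  -2 * ω * ∫ y : ℝ, (ε ^ (-(2 : ℝ) / (p + 1)) * z y * w y + b * deriv z y * deriv w y)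

/-- Rescaled functional `I^ε` (with `ω = ω(ε)`). -/
def Ieps (a b c p ε : ℝ) (z w : ℝ → ℝ) : ℝ :=
  I1eps a c p ε z w + I2eps b p ε (omEps p ε) z w

def IinfEps (a b c p ε : ℝ) : ℝ :=
  sInf {r : ℝ | ∃ z w : ℝ → ℝ, InH1 z ∧ InH1 w ∧ Gfun p z w = -1 ∧
    r = Ieps a b c p ε z w}

def Jeps (a b c p ε : ℝ) (w : ℝ → ℝ) : ℝ :=
  (∫ y : ℝ, ε ^ (-(2 : ℝ) / (p + 1)) * (1 - omEps p ε ^ 2) * w y ^ 2)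
    + ∫ y : ℝ, -((2 * b + c) * omEps p ε ^ 2 + a) * deriv w y ^ 2

def Keps (p ε : ℝ) (w : ℝ → ℝ) : ℝ := Gfun p (fun x => omEps p ε * w x) w

def JinfEps (a b c p ε : ℝ) : ℝ :=
  sInf {r : ℝ | ∃ w : ℝ → ℝ, InH1 w ∧ Keps p ε w = -1 ∧ r = Jeps a b c p ε w}

def J0fun (σ : ℝ) (w : ℝ → ℝ) : ℝ :=
  ∫ y : ℝ, (w y ^ 2 + (σ - 1 / 3) * deriv w y ^ 2)

/-- `K⁰(w) = (2/(p+1)) ∫ w^{p+2}`; the exponent `p+2` has odd numerator and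
odd denominator, so `w^{p+2}` is the sign-preserving power. -/
def K0fun (p : ℝ) (w : ℝ → ℝ) : ℝ :=
  (2 / (p + 1)) * ∫ y : ℝ, opow (w y) (p + 2)

def Jinf0 (σ p : ℝ) : ℝ :=
  sInf {r : ℝ | ∃ w : ℝ → ℝ, InH1 w ∧ K0fun p w = -1 ∧ r = J0fun σ w}

/-- The Beta function `B(x,y) = ∫₀¹ t^{x-1}(1-t)^{y-1} dt`. -/
def betaFn (x y : ℝ) : ℝ := ∫ t in (0 : ℝ)..1, t ^ (x - 1) * (1 - t) ^ (y - 1)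

/-!
Multiplying the first equation by `v`, the second by `ψ` and adding gives, pointwise,
`ψ² - cψ'² + v² - av'² - 2ω(ψv + bψ'v') + ((p+2)/(p+1)) ψ|v|^{p+1} = -W'` with the flux
`W = ωb(ψ'v + ψv') + a vv' + c ψψ'`. Every term is integrable (`v ∈ H¹` is bounded, which
controls the nonlinear term), and so is `W`, so `∫ W' = 0`. This is the Nehari-type identity
`I_ω = -((p+2)/2) G`; the other two identities are algebraic consequences.
-/

theorem mul_opow_self {t q : ℝ} (hq : q + 1 ≠ 0) : t * opow t q = |t| ^ (q + 1) := by
  rw [opow, Real.rpow_add_one' (abs_nonneg t) hq]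
  rcases lt_trichotomy t 0 with h | rfl | h
  · rw [Real.sign_of_neg h, abs_of_neg h]; ring
  · simp
  · rw [Real.sign_of_pos h, abs_of_pos h]; ring

theorem exists_abs_le_of_hasDerivAt_of_integrable {f f' : ℝ → ℝ}
    (hderiv : ∀ x, HasDerivAt f (f' x) x) (hf' : Integrable f') :
    ∃ C, ∀ x, |f x| ≤ C := by
  refine ⟨|f 0| + ∫ t, ‖f' t‖, fun x => ?_⟩
  have hftc : ∫ t in (0 : ℝ)..x, f' t = f x - f 0 :=
    intervalIntegral.integral_eq_sub_of_hasDerivAt (fun t _ => hderiv t) hf'.intervalIntegrable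
  have hle : |f x - f 0| ≤ ∫ t, ‖f' t‖ := by
    rw [← hftc, ← Real.norm_eq_abs]
    exact intervalIntegral.norm_integral_le_integral_norm_uIoc.trans
      (setIntegral_le_integral hf'.norm (Eventually.of_forall fun t => norm_nonneg _))
  linarith [abs_sub_abs_le_abs_sub (f x) (f 0)]

theorem integrable_mul_abs_rpow_add_one {α : Type*} [MeasurableSpace α] {μ : Measure α}
    {f g : α → ℝ} {M p : ℝ} (hp : 0 ≤ p) (hf : AEStronglyMeasurable f μ)
    (hg : AEStronglyMeasurable g μ) (hfg : Integrable (fun x => f x * g x) μ)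
    (hM : ∀ x, |g x| ≤ M) :
    Integrable (fun x => f x * |g x| ^ (p + 1)) μ := by
  refine (hfg.abs.const_mul (M ^ p)).mono' ?_ (Eventually.of_forall fun x => ?_)
  · exact hf.mul (hg.aemeasurable.abs.pow_const _).aestronglyMeasurable
  · rw [Real.norm_eq_abs, abs_mul, abs_of_nonneg (Real.rpow_nonneg (abs_nonneg (g x)) _),
      Real.rpow_add_one' (abs_nonneg _) (by linarith), abs_mul]
    calc |f x| * (|g x| ^ p * |g x|) ≤ |f x| * (M ^ p * |g x|) := by
          gcongr
          exact hM x
      _ = M ^ p * (|f x| * |g x|) := by ring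

theorem ContDiff.hasDerivAt_deriv {f : ℝ → ℝ} (hf : ContDiff ℝ 2 f) (x : ℝ) :
    HasDerivAt (deriv f) (iteratedDeriv 2 f x) x := by
  simpa [iteratedDeriv_succ, iteratedDeriv_one] using
    (hf.differentiable_iteratedDeriv 1 (by norm_num) x).hasDerivAt

namespace InH1

variable {f g : ℝ → ℝ}

theorem continuous (hf : InH1 f) : Continuous f := hf.1.continuous

theorem memLp (hf : InH1 f) : MemLp f 2 volume := hf.2.1

theorem memLp_deriv (hf : InH1 f) : MemLp (deriv f) 2 volume := hf.2.2

theorem exists_abs_le (hf : InH1 f) : ∃ M, ∀ x, |f x| ≤ M := by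
  have hderiv (x : ℝ) : HasDerivAt (fun y => f y ^ 2) (2 * (f x * deriv f x)) x := by
    simpa [mul_assoc] using (hf.1 x).hasDerivAt.fun_pow 2
  obtain ⟨C, hC⟩ := exists_abs_le_of_hasDerivAt_of_integrable hderiv
    ((hf.memLp.integrable_mul hf.memLp_deriv).const_mul 2)
  refine ⟨√C, fun x => Real.abs_le_sqrt ?_⟩
  simpa [sq_abs] using (le_abs_self _).trans (hC x)

theorem integrable_mul_abs_rpow_add_one {p : ℝ} (hf : InH1 f) (hg : InH1 g) (hp : 0 ≤ p) :
    Integrable (fun x => f x * |g x| ^ (p + 1)) := by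
  obtain ⟨M, hM⟩ := hg.exists_abs_le
  exact _root_.integrable_mul_abs_rpow_add_one hp hf.continuous.aestronglyMeasurable
    hg.continuous.aestronglyMeasurable (hf.memLp.integrable_mul hg.memLp) hM

end InH1

def nehariDensity (a b c ω p : ℝ) (ψ v : ℝ → ℝ) (x : ℝ) : ℝ :=
  (ψ x ^ 2 - c * deriv ψ x ^ 2 + v x ^ 2 - a * deriv v x ^ 2)
    + -2 * ω * (ψ x * v x + b * deriv ψ x * deriv v x)
    + (p + 2) / (p + 1) * (ψ x * |v x| ^ (p + 1))

def nehariFlux (a b c ω : ℝ) (ψ v : ℝ → ℝ) (x : ℝ) : ℝ :=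
  ω * b * (deriv ψ x * v x + ψ x * deriv v x) + a * (v x * deriv v x) + c * (ψ x * deriv ψ x)

section Nehari

variable {a b c ω p : ℝ} {ψ v : ℝ → ℝ}

theorem integrable_nehariDensity_terms (hψ : InH1 ψ) (hv : InH1 v) (hp : 0 ≤ p) :
    Integrable (fun x => ψ x ^ 2 - c * deriv ψ x ^ 2 + v x ^ 2 - a * deriv v x ^ 2) ∧
    Integrable (fun x => ψ x * v x + b * deriv ψ x * deriv v x) ∧
    Integrable (fun x => ψ x * |v x| ^ (p + 1)) :=
  ⟨((hψ.memLp.integrable_sq.sub (hψ.memLp_deriv.integrable_sq.const_mul c)).add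
      hv.memLp.integrable_sq).sub (hv.memLp_deriv.integrable_sq.const_mul a),
    (hψ.memLp.integrable_mul hv.memLp).add
      ((hψ.memLp_deriv.const_mul b).integrable_mul hv.memLp_deriv),
    hψ.integrable_mul_abs_rpow_add_one hv hp⟩

theorem integrable_nehariDensity (hψ : InH1 ψ) (hv : InH1 v) (hp : 0 ≤ p) :
    Integrable (nehariDensity a b c ω p ψ v) := by
  obtain ⟨h₁, h₂, hG⟩ := integrable_nehariDensity_terms (a := a) (b := b) (c := c) hψ hv hp
  exact (h₁.add (h₂.const_mul _)).add (hG.const_mul _)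

theorem integral_nehariDensity (hψ : InH1 ψ) (hv : InH1 v) (hp : 0 ≤ p) :
    ∫ x, nehariDensity a b c ω p ψ v x = Ifun a b c ω ψ v + (p + 2) / 2 * Gfun p ψ v := by
  obtain ⟨h₁, h₂, hG⟩ := integrable_nehariDensity_terms (a := a) (b := b) (c := c) hψ hv hp
  refine (integral_add (h₁.add (h₂.const_mul (-2 * ω)))
    (hG.const_mul ((p + 2) / (p + 1)))).trans ?_
  rw [integral_add' h₁ (h₂.const_mul _), integral_const_mul, integral_const_mul]
  simp only [Ifun, I1fun, I2fun, Gfun]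
  field_simp

theorem integrable_nehariFlux (hψ : InH1 ψ) (hv : InH1 v) :
    Integrable (nehariFlux a b c ω ψ v) := by
  unfold nehariFlux
  have hL2 {f g : ℝ → ℝ} (hf : MemLp f 2 volume) (hg : MemLp g 2 volume) :
      Integrable (fun x => f x * g x) := hf.integrable_mul hg
  exact ((((hL2 hψ.memLp_deriv hv.memLp).add (hL2 hψ.memLp hv.memLp_deriv)).const_mul _).add
    ((hL2 hv.memLp hv.memLp_deriv).const_mul _)).add ((hL2 hψ.memLp hψ.memLp_deriv).const_mul _)

theorem TravelingWave.hasDerivAt_nehariFlux (hw : TravelingWave a b c ω p ψ v)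
    (hp : p + 1 ≠ 0) (x : ℝ) :
    HasDerivAt (nehariFlux a b c ω ψ v) (-nehariDensity a b c ω p ψ v x) x := by
  obtain ⟨hψ, hv, hψ₂, hv₂, hψeq, hveq⟩ := hw
  have hψ' := (hψ.1 x).hasDerivAt
  have hv' := (hv.1 x).hasDerivAt
  have hψ'' := hψ₂.hasDerivAt_deriv x
  have hv'' := hv₂.hasDerivAt_deriv x
  refine (((((hψ''.mul hv').add (hψ'.mul hv'')).const_mul (ω * b)).add
    ((hv'.mul hv'').const_mul a)).add ((hψ'.mul hψ'').const_mul c)).congr_deriv ?_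
  have hfrac : (p + 2) / (p + 1) = 1 + 1 / (p + 1) := by field_simp; ring
  unfold nehariDensity
  rw [hfrac]
  linear_combination v x * hψeq x + ψ x * hveq x - ψ x * mul_opow_self (t := v x) hp

theorem TravelingWave.nehari_identity (hw : TravelingWave a b c ω p ψ v) (hp : 0 ≤ p) :
    Ifun a b c ω ψ v = -((p + 2) / 2) * Gfun p ψ v := by
  have hψ : InH1 ψ := hw.1
  have hv : InH1 v := hw.2.1
  have hzero : ∫ x, -nehariDensity a b c ω p ψ v x = 0 :=
    integral_eq_zero_of_hasDerivAt_of_integrable (hw.hasDerivAt_nehariFlux (by positivity))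
      (integrable_nehariDensity hψ hv hp).neg (integrable_nehariFlux hψ hv)
  rw [integral_neg, neg_eq_zero, integral_nehariDensity hψ hv hp] at hzero
  linarith

end Nehari

theorem traveling_wave_identities_general
    (a b c ω p : ℝ)
    (hppos : 0 < p)
    (ψ v : ℝ → ℝ) (hwave : TravelingWave a b c ω p ψ v) :
    Ifun a b c ω ψ v + Gfun p ψ v = (p / (p + 2)) * Ifun a b c ω ψ v ∧
    Ifun a b c ω ψ v + Gfun p ψ v = -(p / 2) * Gfun p ψ v ∧
    Ifun a b c ω ψ v = -((p + 2) / 2) * Gfun p ψ v := by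
  have hI := hwave.nehari_identity hppos.le
  have hp2 : p + 2 ≠ 0 := by positivity
  refine ⟨?_, ?_, hI⟩
  · rw [hI]
    field_simp
    ring
  · rw [hI]
    ring

/-- Identities satisfied by solutions of the traveling-wave
system, where `J_ω = I_ω + G`. -/
theorem traveling_wave_identities
    (a b c ω p : ℝ) (p₁ p₂ : ℕ)
    (ha : a < 0) (hb : 0 < b) (hc : c < 0)
    (hp₁ : Odd p₁) (hp₂ : Odd p₂) (hcop : Nat.Coprime p₁ p₂)
    (hpval : p = (p₁ : ℝ) / (p₂ : ℝ)) (hppos : 0 < p)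
    (ψ v : ℝ → ℝ) (hwave : TravelingWave a b c ω p ψ v) :
    Ifun a b c ω ψ v + Gfun p ψ v = (p / (p + 2)) * Ifun a b c ω ψ v ∧
    Ifun a b c ω ψ v + Gfun p ψ v = -(p / 2) * Gfun p ψ v ∧
    Ifun a b c ω ψ v = -((p + 2) / 2) * Gfun p ψ v :=
  traveling_wave_identities_general a b c ω p hppos ψ v hwave

end
end

section
/- Let b>0, a<0, c<0 satisfy 2b < −a−c, and let 0 < |ω| < min{1, √(ac)/b}. Then the functional I_ω is nonnegative on X; moreover there exist positive constants M₁ and M₂ (depending only on a,b,c,ω) such that M₁‖(ψ,v)‖²_X ≤ I_ω(ψ,v) ≤ M₂‖(ψ,v)‖²_X for all (ψ,v) ∈ X, and the constrained infimum 𝓘_ω = inf{ I_ω(ψ,v) : (ψ,v)∈X, G(ψ,v)=−1 } is finite and strictly positive. -/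
open MeasureTheory Real Filter Topology Set

noncomputable section

private lemma sqInt {f : ℝ → ℝ} (hf : MemLp f 2 (volume : Measure ℝ)) :
    Integrable (fun x => f x ^ 2) (volume : Measure ℝ) :=
  (memLp_two_iff_integrable_sq hf.aestronglyMeasurable).mp hf

private lemma mulInt {f g : ℝ → ℝ} (hf : MemLp f 2 (volume : Measure ℝ))
    (hg : MemLp g 2 (volume : Measure ℝ)) :
    Integrable (fun x => f x * g x) (volume : Measure ℝ) := by
  have hbound : Integrable (fun x => (1:ℝ)/2 * (f x ^ 2 + g x ^ 2)) (volume : Measure ℝ) := by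
    have h : Integrable (fun x => f x ^ 2 + g x ^ 2) (volume : Measure ℝ) :=
      (sqInt hf).add (sqInt hg)
    exact h.const_mul _
  refine Integrable.mono' hbound
    (hf.aestronglyMeasurable.mul hg.aestronglyMeasurable)
    (Filter.Eventually.of_forall fun x => ?_)
  rw [Real.norm_eq_abs, abs_mul]
  nlinarith [sq_nonneg (|f x| - |g x|), sq_abs (f x), sq_abs (g x),
    abs_nonneg (f x), abs_nonneg (g x)]

/-- 1-D Sobolev-type bound: `v(x)² ≤ ∫ (v² + v'²)` for `v ∈ H¹(ℝ)`. -/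
private lemma sobolevSup {v : ℝ → ℝ} (hv : InH1 v) (x : ℝ) :
    v x ^ 2 ≤ ∫ y : ℝ, (v y ^ 2 + deriv v y ^ 2) := by
  obtain ⟨hd, hL2, hdL2⟩ := hv
  have hg : Integrable (fun y => 2 * (v y * deriv v y)) (volume : Measure ℝ) :=
    (mulInt hL2 hdL2).const_mul 2
  have hsum : Integrable (fun y => v y ^ 2 + deriv v y ^ 2) (volume : Measure ℝ) :=
    (sqInt hL2).add (sqInt hdL2)
  have hDer : ∀ y : ℝ, HasDerivAt (fun z => v z ^ 2) (2 * (v y * deriv v y)) y := by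
    intro y
    have h2 := ((hd y).hasDerivAt).fun_pow 2
    refine h2.congr_deriv ?_
    push_cast
    ring
  have hFTC : ∀ y : ℝ, (∫ s in x..y, 2 * (v s * deriv v s)) = v y ^ 2 - v x ^ 2 := fun y =>
    intervalIntegral.integral_eq_sub_of_hasDerivAt (fun s _ => hDer s)
      hg.intervalIntegrable
  set I : ℝ := ∫ s in Set.Ioi x, 2 * (v s * deriv v s) with hIdef
  have htend : Tendsto (fun y : ℝ => ∫ s in x..y, 2 * (v s * deriv v s)) atTop (𝓝 I) :=
    intervalIntegral_tendsto_integral_Ioi x hg.integrableOn tendsto_id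
  have hT : Tendsto (fun y : ℝ => v y ^ 2) atTop (𝓝 (I + v x ^ 2)) := by
    have h1 : Tendsto (fun y : ℝ => v y ^ 2 - v x ^ 2) atTop (𝓝 I) :=
      htend.congr fun y => hFTC y
    have h2 := h1.add_const (v x ^ 2)
    simpa using h2
  have hL0 : I + v x ^ 2 = 0 := by
    have hLnn : 0 ≤ I + v x ^ 2 :=
      ge_of_tendsto hT (Filter.Eventually.of_forall fun y => sq_nonneg (v y))
    by_contra hne
    have hLpos : 0 < I + v x ^ 2 := lt_of_le_of_ne hLnn (Ne.symm hne)
    have hev : ∀ᶠ y in atTop, (I + v x ^ 2) / 2 < v y ^ 2 :=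
      hT.eventually (eventually_gt_nhds (by linarith))
    obtain ⟨A, hA⟩ := Filter.eventually_atTop.1 hev
    have hconst : Integrable (fun _ : ℝ => (I + v x ^ 2) / 2)
        ((volume : Measure ℝ).restrict (Set.Ioi A)) := by
      refine Integrable.mono' ((sqInt hL2).restrict (s := Set.Ioi A))
        aestronglyMeasurable_const ?_
      rw [ae_restrict_iff' measurableSet_Ioi]
      refine Filter.Eventually.of_forall fun y hy => ?_
      have h3 := hA y (le_of_lt hy)
      rw [Real.norm_eq_abs, abs_of_pos (by linarith)]
      linarith
    rcases (integrable_const_iff).1 hconst with h | h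
    · exact absurd h (by positivity)
    · rw [isFiniteMeasure_restrict, Real.volume_Ioi] at h
      exact absurd h (by simp)
  have habs : Integrable (fun y => |2 * (v y * deriv v y)|) (volume : Measure ℝ) := hg.abs
  have h1 : |I| ≤ ∫ s in Set.Ioi x, |2 * (v s * deriv v s)| := by
    rw [hIdef]
    have h := norm_integral_le_integral_norm (μ := (volume : Measure ℝ).restrict (Set.Ioi x))
      (fun s => 2 * (v s * deriv v s))
    simp only [Real.norm_eq_abs] at h
    exact h
  have h2 : (∫ s in Set.Ioi x, |2 * (v s * deriv v s)|) ≤ ∫ s : ℝ, |2 * (v s * deriv v s)| :=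
    setIntegral_le_integral habs (Filter.Eventually.of_forall fun s => abs_nonneg _)
  have h3 : (∫ s : ℝ, |2 * (v s * deriv v s)|) ≤ ∫ s : ℝ, (v s ^ 2 + deriv v s ^ 2) := by
    refine integral_mono habs hsum fun s => abs_le.mpr ⟨?_, ?_⟩
    · nlinarith [sq_nonneg (v s + deriv v s)]
    · nlinarith [sq_nonneg (v s - deriv v s)]
  have h4 : v x ^ 2 = -I := by linarith
  linarith [neg_le_abs I]

set_option maxHeartbeats 1000000

/-- Pointwise two-sided bound for the `I_ω` integrand. -/
private lemma quadBounds (a b c ω k r : ℝ) (ha : a < 0) (hc : c < 0) (hb : 0 < b)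
    (hk0 : 0 < k) (hk : k ^ 2 = a * c) (hω1 : |ω| < 1)
    (hr0 : 0 ≤ r) (hr1 : r ≤ 1) (hrk : |ω| * b ≤ r * k)
    (s t u w : ℝ) :
    min (1 - |ω|) ((1 - r) * min (-a) (-c)) * (s ^ 2 + t ^ 2 + u ^ 2 + w ^ 2)
        ≤ s ^ 2 - c * t ^ 2 + u ^ 2 - a * w ^ 2 + -(2 * ω) * (s * u + b * t * w) ∧
      s ^ 2 - c * t ^ 2 + u ^ 2 - a * w ^ 2 + -(2 * ω) * (s * u + b * t * w)
        ≤ max (1 + |ω|) ((1 + r) * max (-a) (-c)) * (s ^ 2 + t ^ 2 + u ^ 2 + w ^ 2) := by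
  have h1 : (0:ℝ) ≤ |ω| - ω := sub_nonneg.2 (le_abs_self ω)
  have h2 : (0:ℝ) ≤ |ω| + ω := by linarith [neg_abs_le ω]
  have hA1 : -(|ω| * (s ^ 2 + u ^ 2)) ≤ -(2 * ω) * (s * u) := by
    nlinarith [mul_nonneg h1 (sq_nonneg (s + u)), mul_nonneg h2 (sq_nonneg (s - u))]
  have hA2 : -(2 * ω) * (s * u) ≤ |ω| * (s ^ 2 + u ^ 2) := by
    nlinarith [mul_nonneg h1 (sq_nonneg (s - u)), mul_nonneg h2 (sq_nonneg (s + u))]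
  have hQ1 : 0 ≤ -c * t ^ 2 + -a * w ^ 2 - 2 * k * (t * w) := by
    nlinarith [sq_nonneg (k * t + a * w)]
  have hQ2 : 0 ≤ -c * t ^ 2 + -a * w ^ 2 + 2 * k * (t * w) := by
    nlinarith [sq_nonneg (k * t - a * w)]
  have hQpos : 0 ≤ -c * t ^ 2 + -a * w ^ 2 := by nlinarith [sq_nonneg t, sq_nonneg w]
  have hbb1 : 0 ≤ (|ω| - ω) * b := mul_nonneg h1 hb.le
  have hbb2 : 0 ≤ (|ω| + ω) * b := mul_nonneg h2 hb.le
  have hB1k : -(|ω| * b * (-c * t ^ 2 + -a * w ^ 2)) ≤ k * (-(2 * ω) * (b * t * w)) := by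
    nlinarith [mul_nonneg hbb1 hQ2, mul_nonneg hbb2 hQ1]
  have hB2k : k * (-(2 * ω) * (b * t * w)) ≤ |ω| * b * (-c * t ^ 2 + -a * w ^ 2) := by
    nlinarith [mul_nonneg hbb1 hQ1, mul_nonneg hbb2 hQ2]
  have hks : |ω| * b * (-c * t ^ 2 + -a * w ^ 2) ≤ r * k * (-c * t ^ 2 + -a * w ^ 2) :=
    mul_le_mul_of_nonneg_right hrk hQpos
  have hY1 : -(r * (-c * t ^ 2 + -a * w ^ 2)) ≤ -(2 * ω) * (b * t * w) := by
    have hkz : 0 ≤ k * (-(2 * ω) * (b * t * w) + r * (-c * t ^ 2 + -a * w ^ 2)) := by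
      nlinarith [hB1k, hks]
    have hz := (mul_nonneg_iff_of_pos_left hk0).mp hkz
    linarith
  have hY2 : -(2 * ω) * (b * t * w) ≤ r * (-c * t ^ 2 + -a * w ^ 2) := by
    have hkz : 0 ≤ k * (r * (-c * t ^ 2 + -a * w ^ 2) - -(2 * ω) * (b * t * w)) := by
      nlinarith [hB2k, hks]
    have hz := (mul_nonneg_iff_of_pos_left hk0).mp hkz
    linarith
  have hQm : min (-a) (-c) * (t ^ 2 + w ^ 2) ≤ -c * t ^ 2 + -a * w ^ 2 := by
    nlinarith [mul_nonneg (sub_nonneg.2 (min_le_right (-a) (-c))) (sq_nonneg t),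
      mul_nonneg (sub_nonneg.2 (min_le_left (-a) (-c))) (sq_nonneg w)]
  have hQM : -c * t ^ 2 + -a * w ^ 2 ≤ max (-a) (-c) * (t ^ 2 + w ^ 2) := by
    nlinarith [mul_nonneg (sub_nonneg.2 (le_max_right (-a) (-c))) (sq_nonneg t),
      mul_nonneg (sub_nonneg.2 (le_max_left (-a) (-c))) (sq_nonneg w)]
  constructor
  · have f1 : min (1 - |ω|) ((1 - r) * min (-a) (-c)) * (s ^ 2 + u ^ 2)
        ≤ (1 - |ω|) * (s ^ 2 + u ^ 2) :=
      mul_le_mul_of_nonneg_right (min_le_left _ _) (by positivity)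
    have f2 : min (1 - |ω|) ((1 - r) * min (-a) (-c)) * (t ^ 2 + w ^ 2)
        ≤ (1 - r) * min (-a) (-c) * (t ^ 2 + w ^ 2) :=
      mul_le_mul_of_nonneg_right (min_le_right _ _) (by positivity)
    have f3 : (1 - r) * (min (-a) (-c) * (t ^ 2 + w ^ 2))
        ≤ (1 - r) * (-c * t ^ 2 + -a * w ^ 2) :=
      mul_le_mul_of_nonneg_left hQm (by linarith)
    nlinarith [f1, f2, f3, hA1, hY1]
  · have g1 : (1 + |ω|) * (s ^ 2 + u ^ 2)
        ≤ max (1 + |ω|) ((1 + r) * max (-a) (-c)) * (s ^ 2 + u ^ 2) :=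
      mul_le_mul_of_nonneg_right (le_max_left _ _) (by positivity)
    have g2 : (1 + r) * max (-a) (-c) * (t ^ 2 + w ^ 2)
        ≤ max (1 + |ω|) ((1 + r) * max (-a) (-c)) * (t ^ 2 + w ^ 2) :=
      mul_le_mul_of_nonneg_right (le_max_right _ _) (by positivity)
    have g3 : (1 + r) * (-c * t ^ 2 + -a * w ^ 2)
        ≤ (1 + r) * (max (-a) (-c) * (t ^ 2 + w ^ 2)) :=
      mul_le_mul_of_nonneg_left hQM (by linarith)
    nlinarith [g1, g2, g3, hA2, hY2]

/-- Nonnegativity and coercivity of `I_ω`; the constrained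
infimum `𝓘_ω` is finite and strictly positive. -/
theorem Iw_coercive_and_Iinf_positive
    (a b c ω p : ℝ) (p₁ p₂ : ℕ)
    (ha : a < 0) (hb : 0 < b) (hc : c < 0)
    (hrel : 2 * b < -a - c)
    (hω₁ : 0 < |ω|) (hω₂ : |ω| < min 1 (Real.sqrt (a * c) / b))
    (hp₁ : Odd p₁) (hp₂ : Odd p₂) (hcop : Nat.Coprime p₁ p₂)
    (hpval : p = (p₁ : ℝ) / (p₂ : ℝ)) (hppos : 0 < p) :
    (∀ ψ v : ℝ → ℝ, InH1 ψ → InH1 v → 0 ≤ Ifun a b c ω ψ v) ∧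
    (∃ M₁ > (0 : ℝ), ∃ M₂ > (0 : ℝ), ∀ ψ v : ℝ → ℝ, InH1 ψ → InH1 v →
      M₁ * XnormSq ψ v ≤ Ifun a b c ω ψ v ∧
      Ifun a b c ω ψ v ≤ M₂ * XnormSq ψ v) ∧
    BddBelow {r : ℝ | ∃ ψ v : ℝ → ℝ, InH1 ψ ∧ InH1 v ∧ Gfun p ψ v = -1 ∧
      r = Ifun a b c ω ψ v} ∧
    0 < Iinf a b c ω p := by
  have hω1 : |ω| < 1 := lt_of_lt_of_le hω₂ (min_le_left _ _)
  have hac : 0 < a * c := mul_pos_of_neg_of_neg ha hc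
  have hk0 : 0 < Real.sqrt (a * c) := Real.sqrt_pos.mpr hac
  have hk : Real.sqrt (a * c) ^ 2 = a * c := Real.sq_sqrt hac.le
  have hωb : |ω| * b < Real.sqrt (a * c) := by
    have h := lt_of_lt_of_le hω₂ (min_le_right 1 (Real.sqrt (a * c) / b))
    calc |ω| * b < Real.sqrt (a * c) / b * b := mul_lt_mul_of_pos_right h hb
      _ = Real.sqrt (a * c) := by field_simp
  set r : ℝ := |ω| * b / Real.sqrt (a * c) with hrdef
  have hr0 : 0 ≤ r := div_nonneg (mul_nonneg (abs_nonneg ω) hb.le) hk0.le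
  have hr1 : r < 1 := (div_lt_one hk0).mpr hωb
  have hrk : |ω| * b ≤ r * Real.sqrt (a * c) := by
    rw [hrdef, div_mul_cancel₀ _ (ne_of_gt hk0)]
  set M₁ : ℝ := min (1 - |ω|) ((1 - r) * min (-a) (-c)) with hM₁def
  set M₂ : ℝ := max (1 + |ω|) ((1 + r) * max (-a) (-c)) with hM₂def
  have hM₁pos : 0 < M₁ := by
    rw [hM₁def]
    exact lt_min (by linarith)
      (mul_pos (by linarith) (lt_min (neg_pos.2 ha) (neg_pos.2 hc)))
  have hM₂pos : 0 < M₂ := by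
    rw [hM₂def]
    exact lt_of_lt_of_le (by linarith [abs_nonneg ω] : (0:ℝ) < 1 + |ω|) (le_max_left _ _)
  -- main two-sided integral estimate
  have main : ∀ ψ v : ℝ → ℝ, InH1 ψ → InH1 v →
      M₁ * XnormSq ψ v ≤ Ifun a b c ω ψ v ∧ Ifun a b c ω ψ v ≤ M₂ * XnormSq ψ v ∧
        0 ≤ XnormSq ψ v := by
    intro ψ v hψ hv
    have iψ := sqInt hψ.2.1
    have iψ' := sqInt hψ.2.2
    have iv := sqInt hv.2.1
    have iv' := sqInt hv.2.2
    have ip1 := mulInt hψ.2.1 hv.2.1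
    have ip2 := mulInt hψ.2.2 hv.2.2
    have hXint : Integrable
        (fun x => ψ x ^ 2 + deriv ψ x ^ 2 + v x ^ 2 + deriv v x ^ 2)
        (volume : Measure ℝ) := ((iψ.add iψ').add iv).add iv'
    have hGint : Integrable
        (fun x => ψ x ^ 2 - c * deriv ψ x ^ 2 + v x ^ 2 - a * deriv v x ^ 2)
        (volume : Measure ℝ) := ((iψ.sub (iψ'.const_mul c)).add iv).sub (iv'.const_mul a)
    have hPint : Integrable (fun x => ψ x * v x + b * deriv ψ x * deriv v x)
        (volume : Measure ℝ) := by
      have h := ip2.const_mul b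
      exact ip1.add (by simpa [mul_assoc] using h)
    have hFint : Integrable
        (fun x => ψ x ^ 2 - c * deriv ψ x ^ 2 + v x ^ 2 - a * deriv v x ^ 2
          + -(2 * ω) * (ψ x * v x + b * deriv ψ x * deriv v x)) (volume : Measure ℝ) :=
      hGint.add (hPint.const_mul (-(2 * ω)))
    have hIeq : Ifun a b c ω ψ v
        = ∫ x : ℝ, (ψ x ^ 2 - c * deriv ψ x ^ 2 + v x ^ 2 - a * deriv v x ^ 2
          + -(2 * ω) * (ψ x * v x + b * deriv ψ x * deriv v x)) := by
      have h2 : I2fun b ω ψ v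
          = ∫ x : ℝ, -(2 * ω) * (ψ x * v x + b * deriv ψ x * deriv v x) := by
        rw [I2fun, integral_const_mul]
        ring
      rw [Ifun, I1fun, h2, ← integral_add hGint (hPint.const_mul (-(2 * ω)))]
    have hXnonneg : 0 ≤ XnormSq ψ v := integral_nonneg fun x => by positivity
    refine ⟨?_, ?_, hXnonneg⟩
    · rw [hIeq, XnormSq, ← integral_const_mul]
      refine integral_mono (hXint.const_mul M₁) hFint fun x => ?_
      have h := (quadBounds a b c ω (Real.sqrt (a * c)) r ha hc hb hk0 hk hω1 hr0 hr1.le hrk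
        (ψ x) (deriv ψ x) (v x) (deriv v x)).1
      rw [hM₁def]
      exact h
    · rw [hIeq, XnormSq, ← integral_const_mul]
      refine integral_mono hFint (hXint.const_mul M₂) fun x => ?_
      have h := (quadBounds a b c ω (Real.sqrt (a * c)) r ha hc hb hk0 hk hω1 hr0 hr1.le hrk
        (ψ x) (deriv ψ x) (v x) (deriv v x)).2
      rw [hM₂def]
      exact h
  have part1 : ∀ ψ v : ℝ → ℝ, InH1 ψ → InH1 v → 0 ≤ Ifun a b c ω ψ v := by
    intro ψ v hψ hv
    have h := main ψ v hψ hv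
    exact le_trans (mul_nonneg hM₁pos.le h.2.2) h.1
  -- lower bound on the X-norm on the constraint set
  have hlow1 : ∀ ψ v : ℝ → ℝ, InH1 ψ → InH1 v → Gfun p ψ v = -1 → 1 ≤ XnormSq ψ v := by
    intro ψ v hψ hv hG
    have hp1 : (0:ℝ) < p + 1 := by linarith
    have iψ := sqInt hψ.2.1
    have iψ' := sqInt hψ.2.2
    have iv := sqInt hv.2.1
    have iv' := sqInt hv.2.2
    have hXint : Integrable
        (fun x => ψ x ^ 2 + deriv ψ x ^ 2 + v x ^ 2 + deriv v x ^ 2)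
        (volume : Measure ℝ) := ((iψ.add iψ').add iv).add iv'
    have hXnn : 0 ≤ XnormSq ψ v := integral_nonneg fun x => by positivity
    set S : ℝ := Real.sqrt (XnormSq ψ v) with hSdef
    have hS0 : 0 ≤ S := Real.sqrt_nonneg _
    have hS2 : S ^ 2 = XnormSq ψ v := Real.sq_sqrt hXnn
    have hvsup : ∀ x : ℝ, |v x| ≤ S := by
      intro x
      have h1 := sobolevSup hv x
      have h2 : (∫ y : ℝ, (v y ^ 2 + deriv v y ^ 2)) ≤ XnormSq ψ v := by
        refine integral_mono (iv.add iv') hXint fun y => ?_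
        dsimp
        nlinarith [sq_nonneg (ψ y), sq_nonneg (deriv ψ y)]
      rw [hSdef, show |v x| = Real.sqrt (v x ^ 2) by rw [Real.sqrt_sq_eq_abs]]
      exact Real.sqrt_le_sqrt (by linarith)
    have habs : ∀ x : ℝ, |ψ x * |v x| ^ (p + 1)| ≤ S ^ p * |ψ x * v x| := by
      intro x
      have e1 : |v x| ^ (p + 1) = |v x| ^ p * |v x| := by
        rw [Real.rpow_add' (abs_nonneg _) (ne_of_gt hp1), Real.rpow_one]
      calc |ψ x * |v x| ^ (p + 1)| = |ψ x| * |v x| ^ (p + 1) := by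
            rw [abs_mul, abs_of_nonneg (Real.rpow_nonneg (abs_nonneg _) _)]
        _ = |v x| ^ p * (|ψ x| * |v x|) := by rw [e1]; ring
        _ ≤ S ^ p * (|ψ x| * |v x|) :=
            mul_le_mul_of_nonneg_right
              (Real.rpow_le_rpow (abs_nonneg _) (hvsup x) hppos.le) (by positivity)
        _ = S ^ p * |ψ x * v x| := by rw [abs_mul]
    have hpv : Integrable (fun x => ψ x * v x) (volume : Measure ℝ) := mulInt hψ.2.1 hv.2.1
    have hint2 : Integrable (fun x => S ^ p * |ψ x * v x|) (volume : Measure ℝ) :=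
      hpv.abs.const_mul _
    have hint1 : Integrable (fun x => ψ x * |v x| ^ (p + 1)) (volume : Measure ℝ) := by
      refine Integrable.mono' hint2 ?_ (Filter.Eventually.of_forall fun x => ?_)
      · exact (hψ.1.continuous.mul
          ((hv.1.continuous.abs.rpow_const fun x => Or.inr (by linarith)))).aestronglyMeasurable
      · rw [Real.norm_eq_abs]
        exact habs x
    have step2 : (1:ℝ) ≤ (2 / (p + 1)) * ∫ x : ℝ, |ψ x * |v x| ^ (p + 1)| := by
      have h := norm_integral_le_integral_norm (μ := (volume : Measure ℝ))
        (fun x => ψ x * |v x| ^ (p + 1))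
      simp only [Real.norm_eq_abs] at h
      calc (1:ℝ) = |Gfun p ψ v| := by rw [hG]; norm_num
        _ = (2 / (p + 1)) * |∫ x : ℝ, ψ x * |v x| ^ (p + 1)| := by
            rw [Gfun, abs_mul, abs_of_pos (div_pos two_pos hp1)]
        _ ≤ (2 / (p + 1)) * ∫ x : ℝ, |ψ x * |v x| ^ (p + 1)| :=
            mul_le_mul_of_nonneg_left h (le_of_lt (div_pos two_pos hp1))
    have step3 : (∫ x : ℝ, |ψ x * |v x| ^ (p + 1)|) ≤ S ^ p * ∫ x : ℝ, |ψ x * v x| := by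
      rw [← integral_const_mul]
      exact integral_mono hint1.abs hint2 habs
    have step4 : (∫ x : ℝ, |ψ x * v x|) ≤ (1/2) * XnormSq ψ v := by
      rw [XnormSq, ← integral_const_mul]
      refine integral_mono hpv.abs (hXint.const_mul _) fun x => ?_
      dsimp
      rw [abs_mul]
      nlinarith [sq_nonneg (|ψ x| - |v x|), sq_abs (ψ x), sq_abs (v x),
        sq_nonneg (deriv ψ x), sq_nonneg (deriv v x), abs_nonneg (ψ x), abs_nonneg (v x)]
    have hchain : (1:ℝ) ≤ (2 / (p + 1)) * (S ^ p * ((1/2) * XnormSq ψ v)) := by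
      have c1 : (2 / (p + 1)) * (∫ x : ℝ, |ψ x * |v x| ^ (p + 1)|)
          ≤ (2 / (p + 1)) * (S ^ p * ∫ x : ℝ, |ψ x * v x|) :=
        mul_le_mul_of_nonneg_left step3 (le_of_lt (div_pos two_pos hp1))
      have c2 : (2 / (p + 1)) * (S ^ p * ∫ x : ℝ, |ψ x * v x|)
          ≤ (2 / (p + 1)) * (S ^ p * ((1/2) * XnormSq ψ v)) :=
        mul_le_mul_of_nonneg_left
          (mul_le_mul_of_nonneg_left step4 (Real.rpow_nonneg hS0 p))
          (le_of_lt (div_pos two_pos hp1))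
      linarith [step2, c1, c2]
    have hSp : p + 1 ≤ S ^ (p + 2) := by
      have e : (2 / (p + 1)) * (S ^ p * ((1/2) * XnormSq ψ v))
          = (S ^ p * XnormSq ψ v) / (p + 1) := by
        field_simp
      rw [e, le_div_iff₀ hp1, one_mul] at hchain
      have hS2' : S ^ (2:ℝ) = XnormSq ψ v := by
        rw [show (2:ℝ) = ((2:ℕ) : ℝ) by norm_num, Real.rpow_natCast]
        exact hS2
      calc p + 1 ≤ S ^ p * XnormSq ψ v := hchain
        _ = S ^ p * S ^ (2:ℝ) := by rw [hS2']
        _ = S ^ (p + 2) := (Real.rpow_add' hS0 (by linarith)).symm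
    have hS1 : 1 ≤ S := by
      by_contra h
      push_neg at h
      have := Real.rpow_lt_one hS0 h (by linarith : (0:ℝ) < p + 2)
      linarith
    nlinarith [hS2, hS1]
  -- Gaussian witness showing the constraint set is nonempty
  have hp1 : (0:ℝ) < p + 1 := by linarith
  have hp2 : (0:ℝ) < p + 2 := by linarith
  have hc₀pos : 0 < ∫ x : ℝ, Real.exp (-(p + 2) * x ^ 2) := by
    rw [integral_gaussian]
    exact Real.sqrt_pos.mpr (div_pos Real.pi_pos hp2)
  set c₀ : ℝ := ∫ x : ℝ, Real.exp (-(p + 2) * x ^ 2) with hc₀def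
  set tt : ℝ := (p + 1) / (2 * c₀) with httdef
  set v₀ : ℝ → ℝ := fun x => Real.exp (-(x ^ 2)) with hv₀def
  set ψ₀ : ℝ → ℝ := fun x => -tt * Real.exp (-(x ^ 2)) with hψ₀def
  have hder : ∀ x : ℝ, HasDerivAt v₀ (Real.exp (-(x ^ 2)) * -(2 * x)) x := by
    intro x
    have h1 : HasDerivAt (fun y : ℝ => -(y ^ 2)) (-(2 * x)) x := by
      simpa using (hasDerivAt_pow 2 x).fun_neg
    simpa [hv₀def] using h1.exp
  have hv₀diff : Differentiable ℝ v₀ := fun x => (hder x).differentiableAt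
  have hv₀deriv : deriv v₀ = fun x => Real.exp (-(x ^ 2)) * -(2 * x) :=
    funext fun x => (hder x).deriv
  have hsqint : Integrable (fun x : ℝ => v₀ x ^ 2) (volume : Measure ℝ) := by
    have he : (fun x : ℝ => v₀ x ^ 2) = fun x : ℝ => Real.exp (-2 * x ^ 2) := by
      funext x
      rw [hv₀def]
      dsimp
      rw [sq, ← Real.exp_add]
      congr 1
      ring
    rw [he]
    exact integrable_exp_neg_mul_sq (by norm_num)
  have hv₀L2 : MemLp v₀ 2 (volume : Measure ℝ) :=
    (memLp_two_iff_integrable_sq hv₀diff.continuous.aestronglyMeasurable).mpr hsqint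
  have hdcont : Continuous (deriv v₀) := by
    rw [hv₀deriv]
    continuity
  have hdsqint : Integrable (fun x : ℝ => deriv v₀ x ^ 2) (volume : Measure ℝ) := by
    rw [hv₀deriv]
    refine Integrable.mono'
      ((integrable_exp_neg_mul_sq (by norm_num : (0:ℝ) < 1)).const_mul 4)
      (Continuous.aestronglyMeasurable (by continuity))
      (Filter.Eventually.of_forall fun x => ?_)
    rw [Real.norm_eq_abs, abs_of_nonneg (sq_nonneg _)]
    have h1 : x ^ 2 ≤ Real.exp (x ^ 2) := by nlinarith [Real.add_one_le_exp (x ^ 2)]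
    have key : x ^ 2 * (Real.exp (-(x ^ 2)) * Real.exp (-(x ^ 2)))
        ≤ Real.exp (-1 * x ^ 2) := by
      have h3 : Real.exp (x ^ 2) * (Real.exp (-(x ^ 2)) * Real.exp (-(x ^ 2)))
          = Real.exp (-1 * x ^ 2) := by
        rw [← Real.exp_add, ← Real.exp_add]
        congr 1
        ring
      calc x ^ 2 * (Real.exp (-(x ^ 2)) * Real.exp (-(x ^ 2)))
          ≤ Real.exp (x ^ 2) * (Real.exp (-(x ^ 2)) * Real.exp (-(x ^ 2))) :=
            mul_le_mul_of_nonneg_right h1 (by positivity)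
        _ = Real.exp (-1 * x ^ 2) := h3
    show (Real.exp (-(x ^ 2)) * -(2 * x)) ^ 2 ≤ 4 * Real.exp (-1 * x ^ 2)
    nlinarith [key]
  have hv₀dL2 : MemLp (deriv v₀) 2 (volume : Measure ℝ) :=
    (memLp_two_iff_integrable_sq hdcont.aestronglyMeasurable).mpr hdsqint
  have hψ₀der : ∀ x : ℝ, HasDerivAt ψ₀ (-tt * (Real.exp (-(x ^ 2)) * -(2 * x))) x := by
    intro x
    have h := (hder x).const_mul (-tt)
    simpa [hψ₀def, hv₀def] using h
  have hψ₀diff : Differentiable ℝ ψ₀ := fun x => (hψ₀der x).differentiableAt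
  have hψ₀deriv : deriv ψ₀ = fun x => -tt * (Real.exp (-(x ^ 2)) * -(2 * x)) :=
    funext fun x => (hψ₀der x).deriv
  have hψ₀L2 : MemLp ψ₀ 2 (volume : Measure ℝ) := by
    have h := hv₀L2.const_mul (-tt)
    simpa [hψ₀def, hv₀def] using h
  have hψ₀dL2 : MemLp (deriv ψ₀) 2 (volume : Measure ℝ) := by
    rw [hψ₀deriv]
    have h := hv₀dL2.const_mul (-tt)
    rw [hv₀deriv] at h
    simpa using h
  have hInψ₀ : InH1 ψ₀ := ⟨hψ₀diff, hψ₀L2, hψ₀dL2⟩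
  have hInv₀ : InH1 v₀ := ⟨hv₀diff, hv₀L2, hv₀dL2⟩
  have hGval : Gfun p ψ₀ v₀ = -1 := by
    have hpt : ∀ x : ℝ, ψ₀ x * |v₀ x| ^ (p + 1) = -tt * Real.exp (-(p + 2) * x ^ 2) := by
      intro x
      rw [hψ₀def, hv₀def]
      dsimp
      rw [abs_of_pos (Real.exp_pos _), ← Real.exp_mul, mul_assoc, ← Real.exp_add]
      congr 2
      ring
    have hI : (∫ x : ℝ, ψ₀ x * |v₀ x| ^ (p + 1)) = -tt * c₀ := by
      simp_rw [hpt]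
      rw [integral_const_mul, hc₀def]
    rw [Gfun, hI, httdef]
    field_simp
  -- assemble the four conclusions
  refine ⟨part1, ⟨M₁, hM₁pos, M₂, hM₂pos, fun ψ v hψ hv =>
    ⟨(main ψ v hψ hv).1, (main ψ v hψ hv).2.1⟩⟩, ?_, ?_⟩
  · exact ⟨0, fun rr hrr => by
      obtain ⟨ψ, v, hψ, hv, _, rfl⟩ := hrr
      exact part1 ψ v hψ hv⟩
  · rw [Iinf]
    refine lt_of_lt_of_le hM₁pos (le_csInf ⟨Ifun a b c ω ψ₀ v₀, ψ₀, v₀, hInψ₀, hInv₀, hGval, rfl⟩ ?_)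
    rintro rr ⟨ψ, v, hψ, hv, hG, rfl⟩
    have h := main ψ v hψ hv
    have hX1 := hlow1 ψ v hψ hv hG
    calc M₁ = M₁ * 1 := (mul_one M₁).symm
      _ ≤ M₁ * XnormSq ψ v := mul_le_mul_of_nonneg_left hX1 hM₁pos.le
      _ ≤ Ifun a b c ω ψ v := h.1


end
end

section
/- Define f : (0,∞) → ℝ by f(p) = ((p+2)/(p+1))^{2/p} − p²/(2(p+4)). Then: (i) f is strictly decreasing on [1,∞); (ii) f(p) → +∞ as p → 0⁺ and f(p) → −∞ as p → ∞; (iii) for 1 ≤ p ≤ 4 one has f(p) > 1 − p²/(2(p+4)) = (4−p)(p+2)/(2(p+4)) ≥ 0; consequently f has a unique positive root p₀ and p₀ > 4. -/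
open MeasureTheory Real Filter Topology Set

noncomputable section

private lemma aux_h_anti {a b : ℝ} (ha : 0 < a) (hab : a < b) :
    ((b + 2) / (b + 1)) ^ ((2 : ℝ) / b) < ((a + 2) / (a + 1)) ^ ((2 : ℝ) / a) := by
  have hb : 0 < b := lt_trans ha hab
  have hba : (0:ℝ) < (a+2)/(a+1) := by positivity
  have hbb : (0:ℝ) < (b+2)/(b+1) := by positivity
  have h1a : 1 < (a+2)/(a+1) := (one_lt_div (by linarith)).2 (by linarith)
  have h1b : 1 < (b+2)/(b+1) := (one_lt_div (by linarith)).2 (by linarith)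
  rw [Real.rpow_def_of_pos hbb, Real.rpow_def_of_pos hba]
  apply Real.exp_lt_exp.2
  have hlb : 0 < Real.log ((b+2)/(b+1)) := Real.log_pos h1b
  have hla : 0 < Real.log ((a+2)/(a+1)) := Real.log_pos h1a
  have hll : Real.log ((b+2)/(b+1)) < Real.log ((a+2)/(a+1)) := by
    apply Real.log_lt_log hbb
    rw [div_lt_div_iff₀ (by linarith) (by linarith)]
    nlinarith
  have he : (2:ℝ)/b < 2/a := by
    apply div_lt_div_of_pos_left (by norm_num) ha hab
  calc Real.log ((b+2)/(b+1)) * (2/b) < Real.log ((b+2)/(b+1)) * (2/a) := by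
        exact mul_lt_mul_of_pos_left he hlb
    _ < Real.log ((a+2)/(a+1)) * (2/a) := by
        exact mul_lt_mul_of_pos_right hll (by positivity)

private lemma aux_s_mono {a b : ℝ} (ha : 0 < a) (hab : a < b) :
    a ^ 2 / (2 * (a + 4)) < b ^ 2 / (2 * (b + 4)) := by
  rw [div_lt_div_iff₀ (by linarith) (by linarith)]
  have hb : 0 < b := lt_trans ha hab
  have key : 0 < (b - a) * (a*b + 4*a + 4*b) :=
    mul_pos (sub_pos.2 hab) (by nlinarith)
  nlinarith [key]

private lemma aux_pos {q : ℝ} (hq : 0 < q) :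
    1 < ((q + 2) / (q + 1)) ^ ((2 : ℝ) / q) := by
  apply Real.one_lt_rpow_iff_of_pos (by positivity) |>.2
  left
  exact ⟨(one_lt_div (by linarith)).2 (by linarith), by positivity⟩

private lemma aux_fpos {q : ℝ} (hq : 0 < q) (hq4 : q ≤ 4) :
    0 < ((q + 2) / (q + 1)) ^ ((2 : ℝ) / q) - q ^ 2 / (2 * (q + 4)) := by
  have h1 := aux_pos hq
  have h2 : q ^ 2 / (2 * (q + 4)) ≤ 1 := by
    rw [div_le_one (by linarith)]
    nlinarith
  linarith

private lemma aux_anti : StrictAntiOn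
    (fun q : ℝ => ((q + 2) / (q + 1)) ^ ((2 : ℝ) / q) - q ^ 2 / (2 * (q + 4)))
    (Ici 1) := by
  intro a ha b hb hab
  simp only [mem_Ici] at ha hb
  have h1 := aux_h_anti (by linarith : (0:ℝ) < a) hab
  have h2 := aux_s_mono (by linarith : (0:ℝ) < a) hab
  dsimp only
  linarith

private lemma aux_top : Tendsto
    (fun q : ℝ => ((q + 2) / (q + 1)) ^ ((2 : ℝ) / q) - q ^ 2 / (2 * (q + 4)))
    (𝓝[>] 0) atTop := by
  have hg : Tendsto (fun q : ℝ => Real.exp (Real.log (3/2) * (2 / q)) - 1)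
      (𝓝[>] 0) atTop := by
    apply tendsto_atTop_add_const_right
    apply Real.tendsto_exp_atTop.comp
    apply Tendsto.const_mul_atTop (by positivity : (0:ℝ) < Real.log (3/2))
    have : Tendsto (fun q : ℝ => q⁻¹) (𝓝[>] 0) atTop := tendsto_inv_nhdsGT_zero
    have h2 := this.const_mul_atTop (by norm_num : (0:ℝ) < 2)
    exact h2.congr (fun q => (div_eq_mul_inv 2 q).symm)
  apply tendsto_atTop_mono' _ _ hg
  filter_upwards [Ioo_mem_nhdsGT_of_mem (by norm_num : (0:ℝ) ∈ Ico 0 1)] with q hq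
  obtain ⟨hq0, hq1⟩ := hq
  have hbp : (0:ℝ) < (q+2)/(q+1) := by positivity
  have hle : Real.exp (Real.log (3/2) * (2/q)) ≤ ((q + 2) / (q + 1)) ^ ((2 : ℝ) / q) := by
    rw [Real.rpow_def_of_pos hbp]
    apply Real.exp_le_exp.2
    apply mul_le_mul_of_nonneg_right _ (by positivity)
    apply Real.log_le_log (by norm_num)
    rw [le_div_iff₀ (by linarith)]
    nlinarith
  have h2 : q ^ 2 / (2 * (q + 4)) ≤ 1 := by
    rw [div_le_one (by linarith)]
    nlinarith
  linarith

private lemma aux_bot : Tendsto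
    (fun q : ℝ => ((q + 2) / (q + 1)) ^ ((2 : ℝ) / q) - q ^ 2 / (2 * (q + 4)))
    atTop atBot := by
  have hg : Tendsto (fun q : ℝ => 4 - (q - 4) / 2) atTop atBot := by
    have h1 : Tendsto (fun q : ℝ => (q - 4) / 2) atTop atTop :=
      (tendsto_atTop_add_const_right _ (-4) tendsto_id).atTop_div_const (by norm_num)
    have h2 := tendsto_neg_atTop_atBot.comp h1
    simpa [sub_eq_add_neg, Function.comp] using tendsto_atBot_add_const_left atTop 4 h2
  apply tendsto_atBot_mono' _ _ hg
  filter_upwards [eventually_ge_atTop (1:ℝ)] with q hq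
  have hbp : (0:ℝ) < (q+2)/(q+1) := by positivity
  have hb2 : (q+2)/(q+1) ≤ 2 := by
    rw [div_le_iff₀ (by linarith)]; linarith
  have hb1 : (1:ℝ) ≤ (q+2)/(q+1) := by
    rw [le_div_iff₀ (by linarith)]; linarith
  have hle : ((q + 2) / (q + 1)) ^ ((2 : ℝ) / q) ≤ 4 := by
    calc ((q + 2) / (q + 1)) ^ ((2 : ℝ) / q) ≤ ((q + 2) / (q + 1)) ^ (2 : ℝ) := by
          apply Real.rpow_le_rpow_of_exponent_le hb1
          rw [div_le_iff₀ (by linarith)]; linarith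
      _ = ((q + 2) / (q + 1)) ^ (2 : ℕ) := by
          rw [← Real.rpow_natCast]; norm_num
      _ ≤ 2 ^ (2 : ℕ) := by
          apply pow_le_pow_left₀ (by positivity) hb2
      _ = 4 := by norm_num
  have h2 : (q - 4) / 2 ≤ q ^ 2 / (2 * (q + 4)) := by
    rw [div_le_div_iff₀ (by norm_num) (by linarith)]
    nlinarith
  linarith

/-- Properties of `f(p) = ((p+2)/(p+1))^{2/p} - p²/(2(p+4))`:
strict monotonicity on `[1,∞)`, limits at `0⁺` and `∞`, positivity on `[1,4]`,
and the existence of a unique positive root `p₀ > 4`. -/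
theorem critical_exponent_function_properties :
    StrictAntiOn
      (fun q : ℝ => ((q + 2) / (q + 1)) ^ ((2 : ℝ) / q) - q ^ 2 / (2 * (q + 4)))
      (Ici 1) ∧
    Tendsto
      (fun q : ℝ => ((q + 2) / (q + 1)) ^ ((2 : ℝ) / q) - q ^ 2 / (2 * (q + 4)))
      (𝓝[>] 0) atTop ∧
    Tendsto
      (fun q : ℝ => ((q + 2) / (q + 1)) ^ ((2 : ℝ) / q) - q ^ 2 / (2 * (q + 4)))
      atTop atBot ∧
    (∀ q : ℝ, 1 ≤ q → q ≤ 4 →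
      ((q + 2) / (q + 1)) ^ ((2 : ℝ) / q) - q ^ 2 / (2 * (q + 4))
          > 1 - q ^ 2 / (2 * (q + 4)) ∧
      1 - q ^ 2 / (2 * (q + 4)) = (4 - q) * (q + 2) / (2 * (q + 4)) ∧
      0 ≤ (4 - q) * (q + 2) / (2 * (q + 4))) ∧
    (∃ p₀ : ℝ, 4 < p₀ ∧ 0 < p₀ ∧
      ((p₀ + 2) / (p₀ + 1)) ^ ((2 : ℝ) / p₀) - p₀ ^ 2 / (2 * (p₀ + 4)) = 0 ∧
      ∀ q : ℝ, 0 < q →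
        ((q + 2) / (q + 1)) ^ ((2 : ℝ) / q) - q ^ 2 / (2 * (q + 4)) = 0 →
        q = p₀) := by
  set f : ℝ → ℝ :=
    fun q : ℝ => ((q + 2) / (q + 1)) ^ ((2 : ℝ) / q) - q ^ 2 / (2 * (q + 4)) with hf
  refine ⟨aux_anti, aux_top, aux_bot, ?_, ?_⟩
  · intro q hq1 hq4
    refine ⟨by have := aux_pos (by linarith : (0:ℝ) < q); linarith, ?_, ?_⟩
    · field_simp
      ring
    · apply div_nonneg _ (by linarith)
      nlinarith
  · -- existence via IVT on [4, 20]
    have hcont : ContinuousOn f (Icc 4 20) := by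
      apply continuousOn_of_forall_continuousAt
      intro x hx
      simp only [mem_Icc] at hx
      apply ContinuousAt.sub
      · apply ContinuousAt.rpow
        · fun_prop (disch := intro; linarith)
        · fun_prop (disch := intro; linarith)
        · left
          have hpos : (0:ℝ) < (x+2)/(x+1) := div_pos (by linarith) (by linarith)
          exact ne_of_gt hpos
      · fun_prop (disch := intro; linarith)
    have hf4 : 0 < f 4 := aux_fpos (by norm_num) (by norm_num)
    have hf20 : f 20 < 0 := by
      have hb1 : (1:ℝ) ≤ ((20:ℝ)+2)/(20+1) := by norm_num
      have h1 : (((20:ℝ)+2)/(20+1)) ^ ((2:ℝ)/20) ≤ (((20:ℝ)+2)/(20+1)) ^ (1:ℝ) :=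
        Real.rpow_le_rpow_of_exponent_le hb1 (by norm_num)
      rw [Real.rpow_one] at h1
      have heq : f 20 = (((20:ℝ)+2)/(20+1)) ^ ((2:ℝ)/20) - 20^2/(2*(20+4)) := by rw [hf]
      rw [heq]
      norm_num at h1 ⊢
      linarith
    have hiv : (0:ℝ) ∈ f '' Icc 4 20 := by
      apply intermediate_value_Icc' (by norm_num) hcont
      exact ⟨le_of_lt hf20, le_of_lt hf4⟩
    obtain ⟨p₀, hp₀mem, hp₀⟩ := hiv
    simp only [mem_Icc] at hp₀mem
    have hp4 : 4 < p₀ := by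
      rcases lt_or_eq_of_le hp₀mem.1 with h | h
      · exact h
      · exfalso; rw [← h] at hp₀; linarith
    refine ⟨p₀, hp4, by linarith, hp₀, ?_⟩
    intro q hq hfq
    by_contra hne
    have hq4 : 4 < q := by
      by_contra h
      push_neg at h
      have := aux_fpos hq h
      linarith
    exact hne (aux_anti.injOn (mem_Ici.2 (by linarith : (1:ℝ) ≤ q))
      (mem_Ici.2 (by linarith : (1:ℝ) ≤ p₀)) (hfq.trans hp₀.symm))


end
end

section
/- Let a<0, c<0, and let p = p₁/p₂ ≥ 1 be a rational with p₁, p₂ odd and coprime. Then there exist positive constants c₀ and c₁, depending only on a, c, and p, such that for all (η,u) ∈ X: 𝓗(η,u) ≥ c₀·‖(η,u)‖²_X·(1 − c₁·‖(η,u)‖^p_X). In particular, if ‖(η,u)‖_X ≤ (1/(2c₁))^{1/p} then 𝓗(η,u) ≥ 0 and ‖(η,u)‖_X ≤ (2𝓗(η,u)/c₀)^{1/2}. -/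
open MeasureTheory Real Filter Topology Set

noncomputable section

/-! The Sobolev embedding `H¹(ℝ) ⊂ L^∞` in the form `|u(x)|² ≤ ‖u‖²_{H¹}` bounds the nonlinear
term pointwise: `|η| |u|^{p+1} ≤ ‖(η,u)‖_X^p |η| |u| ≤ ‖(η,u)‖_X^p (η² + u²)/2`. The quadratic part of
`𝓗` dominates `min 1 (-a) (-c) · ‖(η,u)‖²_X`, which gives the estimate with
`c₀ = min 1 (-a) (-c) / 2` and `c₁ = 1 / (min 1 (-a) (-c) (p + 1))`. -/

namespace InH1

variable {f g : ℝ → ℝ}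

lemma integrable_sq (hf : InH1 f) : Integrable (fun x => f x ^ 2) :=
  hf.2.1.integrable_sq

lemma integrable_deriv_sq (hf : InH1 f) : Integrable (fun x => deriv f x ^ 2) :=
  hf.2.2.integrable_sq

lemma integrable_XnormSq_integrand (hf : InH1 f) (hg : InH1 g) :
    Integrable (fun x => f x ^ 2 + deriv f x ^ 2 + g x ^ 2 + deriv g x ^ 2) :=
  ((hf.integrable_sq.add hf.integrable_deriv_sq).add hg.integrable_sq).add hg.integrable_deriv_sq

/-- `f x ^ 2 = ∫_{-∞}^x 2 f f'`, because `f²` is integrable and hence vanishes at `-∞`. -/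
lemma sq_le_integral (hf : InH1 f) (x : ℝ) :
    f x ^ 2 ≤ ∫ y, (f y ^ 2 + deriv f y ^ 2) := by
  have hderiv : ∀ y, HasDerivAt (fun t => f t ^ 2) (2 * f y * deriv f y) y := fun y => by
    simpa using (hf.1 y).hasDerivAt.fun_pow 2
  have hint : Integrable (fun y => 2 * f y * deriv f y) := by
    simpa only [Pi.mul_apply, mul_assoc] using (hf.2.1.integrable_mul hf.2.2).const_mul 2
  have hsum : Integrable (fun y => f y ^ 2 + deriv f y ^ 2) :=
    hf.integrable_sq.add hf.integrable_deriv_sq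
  have hlim : Tendsto (fun y => f y ^ 2) atBot (𝓝 0) :=
    tendsto_zero_of_hasDerivAt_of_integrableOn_Iic (a := x) (fun y _ => hderiv y)
      hint.integrableOn hf.integrable_sq.integrableOn
  calc f x ^ 2 = ∫ y in Iic x, 2 * f y * deriv f y := by
        rw [integral_Iic_of_hasDerivAt_of_tendsto' (fun y _ => hderiv y) hint.integrableOn hlim,
          sub_zero]
    _ ≤ ∫ y in Iic x, (f y ^ 2 + deriv f y ^ 2) :=
        setIntegral_mono hint.integrableOn hsum.integrableOn fun y => two_mul_le_add_sq _ _
    _ ≤ ∫ y, (f y ^ 2 + deriv f y ^ 2) :=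
        setIntegral_le_integral hsum (ae_of_all _ fun y => by positivity)

lemma abs_le_sqrt_XnormSq (hf : InH1 f) (hg : InH1 g) (x : ℝ) :
    |g x| ≤ Real.sqrt (XnormSq f g) := by
  rw [← Real.sqrt_sq_eq_abs]
  refine Real.sqrt_le_sqrt ((hg.sq_le_integral x).trans ?_)
  refine integral_mono (hg.integrable_sq.add hg.integrable_deriv_sq)
    (hf.integrable_XnormSq_integrand hg) fun y => ?_
  nlinarith [sq_nonneg (f y), sq_nonneg (deriv f y)]

end InH1

lemma abs_mul_abs_rpow_succ_le {p N e v : ℝ} (hp : 0 < p) (hv : |v| ≤ N) :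
    |2 / (p + 1) * e * |v| ^ (p + 1)| ≤ N ^ p / (p + 1) * (e ^ 2 + v ^ 2) := by
  have hpow : |v| ^ (p + 1) ≤ N ^ p * |v| := by
    rw [Real.rpow_add' (abs_nonneg v) (by linarith), Real.rpow_one]
    gcongr
  calc |2 / (p + 1) * e * |v| ^ (p + 1)| = 2 / (p + 1) * |e| * |v| ^ (p + 1) := by
        rw [abs_mul, abs_mul, abs_of_pos (by positivity : (0 : ℝ) < 2 / (p + 1)),
          abs_of_nonneg (by positivity : (0 : ℝ) ≤ |v| ^ (p + 1))]
    _ ≤ 2 / (p + 1) * |e| * (N ^ p * |v|) := by gcongr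
    _ = N ^ p / (p + 1) * (2 * |e| * |v|) := by ring
    _ ≤ N ^ p / (p + 1) * (e ^ 2 + v ^ 2) := by
        have hN : 0 ≤ N := (abs_nonneg v).trans hv
        gcongr
        simpa only [sq_abs] using two_mul_le_add_sq |e| |v|

lemma integrand_Ham_ge {a c p m N e e' v v' : ℝ} (hp : 0 < p)
    (hm1 : m ≤ 1) (hma : m ≤ -a) (hmc : m ≤ -c) (hv : |v| ≤ N) :
    (m - N ^ p / (p + 1)) * (e ^ 2 + e' ^ 2 + v ^ 2 + v' ^ 2) ≤
      e ^ 2 - c * e' ^ 2 + v ^ 2 - a * v' ^ 2 + 2 / (p + 1) * e * |v| ^ (p + 1) := by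
  have hnl := neg_abs_le (2 / (p + 1) * e * |v| ^ (p + 1))
  have hbound := abs_mul_abs_rpow_succ_le (e := e) hp hv
  have hNp : 0 ≤ N ^ p / (p + 1) := by
    have hN : 0 ≤ N := (abs_nonneg v).trans hv
    positivity
  nlinarith [mul_le_mul_of_nonneg_right hm1 (sq_nonneg e),
    mul_le_mul_of_nonneg_right hmc (sq_nonneg e'),
    mul_le_mul_of_nonneg_right hm1 (sq_nonneg v),
    mul_le_mul_of_nonneg_right hma (sq_nonneg v'),
    mul_nonneg hNp (add_nonneg (sq_nonneg e') (sq_nonneg v'))]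

lemma half_mul_XnormSq_le_Ham {a c p m : ℝ} (hp : 0 < p)
    (hm1 : m ≤ 1) (hma : m ≤ -a) (hmc : m ≤ -c) {η u : ℝ → ℝ} (hη : InH1 η) (hu : InH1 u) :
    1 / 2 * (m - Real.sqrt (XnormSq η u) ^ p / (p + 1)) * XnormSq η u ≤ Ham a c p η u := by
  set N := Real.sqrt (XnormSq η u)
  have hsup : ∀ x, |u x| ≤ N := hη.abs_le_sqrt_XnormSq hu
  have hnl : Integrable (fun x => 2 / (p + 1) * η x * |u x| ^ (p + 1)) := by
    refine Integrable.mono' ((hη.integrable_sq.add hu.integrable_sq).const_mul (N ^ p / (p + 1)))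
      ?_ (ae_of_all _ fun x => abs_mul_abs_rpow_succ_le hp (hsup x))
    have hη_cont := hη.1.continuous
    have hu_cont := hu.1.continuous
    exact (by fun_prop (disch := positivity) : Continuous _).aestronglyMeasurable
  have hF : Integrable (fun x => η x ^ 2 - c * deriv η x ^ 2 + u x ^ 2 - a * deriv u x ^ 2
      + 2 / (p + 1) * η x * |u x| ^ (p + 1)) :=
    ((((hη.integrable_sq.sub (hη.integrable_deriv_sq.const_mul c)).add hu.integrable_sq).sub
      (hu.integrable_deriv_sq.const_mul a))).add hnl
  rw [Ham, XnormSq, mul_assoc, ← integral_const_mul]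
  exact mul_le_mul_of_nonneg_left (integral_mono ((hη.integrable_XnormSq_integrand hu).const_mul _)
    hF fun x => integrand_Ham_ge hp hm1 hma hmc (hsup x)) (by norm_num)

lemma nonneg_and_le_sqrt_of_coercive {H N p c₀ c₁ : ℝ} (hp : 0 < p) (hc₀ : 0 < c₀) (hc₁ : 0 < c₁)
    (hN : 0 ≤ N) (hH : c₀ * N ^ 2 * (1 - c₁ * N ^ p) ≤ H) (hsmall : N ≤ (1 / (2 * c₁)) ^ (1 / p)) :
    0 ≤ H ∧ N ≤ Real.sqrt (2 * H / c₀) := by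
  rw [one_div p, Real.le_rpow_inv_iff_of_pos hN (by positivity) hp,
    le_div_iff₀ (by positivity)] at hsmall
  have hQ : 0 ≤ c₀ * N ^ 2 := by positivity
  have hH' : c₀ * N ^ 2 / 2 ≤ H := by nlinarith
  refine ⟨by linarith, ?_⟩
  rw [← Real.sqrt_sq hN]
  exact Real.sqrt_le_sqrt (by rw [le_div_iff₀ hc₀]; linarith)

theorem hamiltonian_coercivity_general
    (a c p : ℝ)
    (ha : a < 0) (hc : c < 0)
    (hp1 : 1 ≤ p) :
    ∃ c₀ > (0 : ℝ), ∃ c₁ > (0 : ℝ),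
      (∀ η u : ℝ → ℝ, InH1 η → InH1 u →
        Ham a c p η u ≥ c₀ * Real.sqrt (XnormSq η u) ^ 2 *
          (1 - c₁ * Real.sqrt (XnormSq η u) ^ p)) ∧
      (∀ η u : ℝ → ℝ, InH1 η → InH1 u →
        Real.sqrt (XnormSq η u) ≤ (1 / (2 * c₁)) ^ (1 / p) →
          0 ≤ Ham a c p η u ∧
          Real.sqrt (XnormSq η u) ≤ Real.sqrt (2 * Ham a c p η u / c₀)) := by
  have hp : 0 < p := one_pos.trans_le hp1
  obtain ⟨m, hm, hm1, hma, hmc⟩ : ∃ m > 0, m ≤ 1 ∧ m ≤ -a ∧ m ≤ -c :=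
    ⟨min 1 (min (-a) (-c)), lt_min one_pos (lt_min (neg_pos.2 ha) (neg_pos.2 hc)),
      min_le_left _ _, (min_le_right _ _).trans (min_le_left _ _),
      (min_le_right _ _).trans (min_le_right _ _)⟩
  have hcoercive : ∀ η u : ℝ → ℝ, InH1 η → InH1 u →
      m / 2 * Real.sqrt (XnormSq η u) ^ 2 * (1 - 1 / (m * (p + 1)) * Real.sqrt (XnormSq η u) ^ p)
        ≤ Ham a c p η u := fun η u hη hu => by
    have hQ : 0 ≤ XnormSq η u := integral_nonneg fun x => by positivity
    convert half_mul_XnormSq_le_Ham hp hm1 hma hmc hη hu using 1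
    rw [Real.sq_sqrt hQ]
    field_simp
  refine ⟨m / 2, by positivity, 1 / (m * (p + 1)), by positivity, hcoercive,
    fun η u hη hu hsmall => ?_⟩
  exact nonneg_and_le_sqrt_of_coercive hp (by positivity) (by positivity) (Real.sqrt_nonneg _)
    (hcoercive η u hη hu) hsmall

/-- Coercivity of the Hamiltonian near the origin:
`𝓗(η,u) ≥ c₀‖(η,u)‖²_X (1 - c₁‖(η,u)‖ᵖ_X)`, and the resulting a priori bound
for small data. -/
theorem hamiltonian_coercivity
    (a c p : ℝ) (p₁ p₂ : ℕ)
    (ha : a < 0) (hc : c < 0)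
    (hp₁ : Odd p₁) (hp₂ : Odd p₂) (hcop : Nat.Coprime p₁ p₂)
    (hpval : p = (p₁ : ℝ) / (p₂ : ℝ)) (hp1 : 1 ≤ p) :
    ∃ c₀ > (0 : ℝ), ∃ c₁ > (0 : ℝ),
      (∀ η u : ℝ → ℝ, InH1 η → InH1 u →
        Ham a c p η u ≥ c₀ * Real.sqrt (XnormSq η u) ^ 2 *
          (1 - c₁ * Real.sqrt (XnormSq η u) ^ p)) ∧
      (∀ η u : ℝ → ℝ, InH1 η → InH1 u →
        Real.sqrt (XnormSq η u) ≤ (1 / (2 * c₁)) ^ (1 / p) →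
          0 ≤ Ham a c p η u ∧
          Real.sqrt (XnormSq η u) ≤ Real.sqrt (2 * Ham a c p η u / c₀)) :=
  hamiltonian_coercivity_general a c p ha hc hp1

end
end
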